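/- arXiv:2602.06162 — 3 statements merged into one kernel-verified Lean document; each statement's English description precedes it below -/
import Mathlib

section
/- Every finite subgroup of $\mathrm{GL}_2(\mathbb{Q})$ has order at most $12$. -/
/-!
The determinant maps `G` into the torsion of `ℚˣ`, which is `{±1}`, so it suffices to show that
`H = G ∩ SL₂(ℚ)` has at most `6` elements. Averaging `gᵀ g` over `H` gives a positive definite
form `A` that `H` preserves. A determinant-one matrix preserving `A` is a rational combination
of `1` and `J = adj(A) · !![0, 1; -1, 0]`, whose square is `-det A < 0`, so `H` embeds into the
imaginary quadratic field `ℚ(J) ≅ ℚ(√-det A)`. There `H` is cyclic; a generator `z` has norm `1`,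
and its trace `z + z⁻¹` is rational and integral over `ℤ`, hence an integer `t` with `|t| ≤ 2`.
Each of the five possible equations `z² - t z + 1 = 0` makes `z` a root of unity of order at
most `6`.
-/

open Matrix

theorem exists_orderOf_eq_natCard_of_injective {H R : Type*} [Group H] [Finite H] [CommRing R]
    [IsDomain R] (φ : H →* R) (hφ : Function.Injective φ) :
    ∃ x : H, orderOf (φ x) = Nat.card H := by
  have := isCyclic_of_injective_ringHom φ hφ
  obtain ⟨x, hx⟩ := IsCyclic.exists_ofOrder_eq_natCard (α := H)
  exact ⟨x, by rw [orderOf_injective φ hφ, hx]⟩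

theorem natCard_le_two_of_subgroup_units {R : Type*} [CommRing R] [LinearOrder R]
    [IsStrictOrderedRing R] (S : Subgroup Rˣ) [Finite S] : Nat.card S ≤ 2 := by
  obtain ⟨x, hx⟩ := exists_orderOf_eq_natCard_of_injective ((Units.coeHom R).comp S.subtype)
    (Units.val_injective.comp S.subtype_injective)
  rw [← hx]
  exact LinearOrderedRing.orderOf_le_two

theorem orderOf_le_six_of_sq_sub_mul_add_one_eq_zero {R : Type*} [CommRing R] [IsDomain R]
    {z : R} {m : ℤ} (hm : |m| ≤ 2) (hz : z ^ 2 - m * z + 1 = 0) : orderOf z ≤ 6 := by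
  obtain ⟨k, hk, hk6, hzk⟩ : ∃ k, 0 < k ∧ k ≤ 6 ∧ z ^ k = 1 := by
    obtain ⟨hm₁, hm₂⟩ := abs_le.mp hm
    interval_cases m <;> push_cast at hz
    · have : z + 1 = 0 := pow_eq_zero_iff two_ne_zero |>.mp (by linear_combination hz)
      exact ⟨2, by norm_num, by norm_num, by linear_combination (z - 1) * this⟩
    · exact ⟨3, by norm_num, by norm_num, by linear_combination (z - 1) * hz⟩
    · exact ⟨4, by norm_num, by norm_num, by linear_combination (z ^ 2 - 1) * hz⟩
    · exact ⟨6, by norm_num, by norm_num, by linear_combination (z ^ 4 + z ^ 3 - z - 1) * hz⟩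
    · have : z - 1 = 0 := pow_eq_zero_iff two_ne_zero |>.mp (by linear_combination hz)
      exact ⟨1, by norm_num, by norm_num, by linear_combination this⟩
  exact (orderOf_le_of_pow_eq_one hk hzk).trans hk6

namespace QuadraticAlgebra

theorem isIntegral_trace_of_isOfFinOrder {R : Type*} [CommRing R] {a b : R}
    {z : QuadraticAlgebra R a b} (hz : IsOfFinOrder z) : IsIntegral ℤ (trace z) := by
  obtain ⟨n, hn, hzn⟩ := hz.exists_pow_eq_one
  have hstar : star z ^ n = 1 := by rw [← star_pow, hzn, star_one]
  rw [← isIntegral_algebraMap_iff (algebraMap_injective (a := a) (b := b)),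
    algebraMap_trace_eq_add_star]
  exact (IsIntegral.of_pow hn (hzn ▸ isIntegral_one)).add
    (IsIntegral.of_pow hn (hstar ▸ isIntegral_one))

section Imaginary

variable {K : Type*} [Field K] [LinearOrder K] [IsStrictOrderedRing K] {a : K}

theorem fact_sq_ne_of_neg (ha : a < 0) : Fact (∀ r : K, r ^ 2 ≠ a + 0 * r) :=
  ⟨fun r h => by nlinarith [sq_nonneg r]⟩

theorem norm_nonneg_of_nonpos (ha : a ≤ 0) (z : QuadraticAlgebra K a 0) : 0 ≤ norm z := by
  rw [norm_def]
  nlinarith [mul_self_nonneg z.re, mul_self_nonneg z.im]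

theorem abs_trace_le_two (ha : a ≤ 0) {z : QuadraticAlgebra K a 0} (hz : norm z = 1) :
    |trace z| ≤ 2 := by
  rw [norm_def] at hz
  rw [trace_def, abs_le]
  constructor <;>
    nlinarith [mul_self_nonneg z.im, mul_self_nonneg (z.re + 1), mul_self_nonneg (z.re - 1)]

end Imaginary

theorem orderOf_le_six {a : ℚ} (ha : a < 0) {z : QuadraticAlgebra ℚ a 0} (hz : IsOfFinOrder z) :
    orderOf z ≤ 6 := by
  have := fact_sq_ne_of_neg ha
  have hnorm : norm z = 1 := (norm.isOfFinOrder hz).eq_one (norm_nonneg_of_nonpos ha.le z)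
  obtain ⟨m, hm⟩ := IsIntegrallyClosed.isIntegral_iff.mp (isIntegral_trace_of_isOfFinOrder hz)
  rw [eq_intCast] at hm
  refine orderOf_le_six_of_sq_sub_mul_add_one_eq_zero (m := m) ?_ ?_
  · exact_mod_cast hm ▸ abs_trace_le_two ha.le hnorm
  · have := sq_sub_trace_smul_add_norm_eq_zero z
    rw [hnorm, ← hm, map_one] at this
    simpa [Algebra.smul_def] using this

end QuadraticAlgebra

section InvariantForm

variable {R H n : Type*} [CommRing R] [Group H] [Fintype H] [Fintype n] [DecidableEq n]

def invariantForm (ρ : H →* GL n R) : Matrix n n R :=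
  ∑ h, (ρ h : Matrix n n R)ᵀ * ρ h

theorem transpose_mul_invariantForm_mul (ρ : H →* GL n R) (g : H) :
    (ρ g : Matrix n n R)ᵀ * invariantForm ρ * ρ g = invariantForm ρ := by
  rw [invariantForm, Finset.mul_sum, Finset.sum_mul]
  refine Fintype.sum_equiv (Equiv.mulRight g) _ _ fun h => ?_
  simp only [Equiv.coe_mulRight, map_mul, Units.val_mul, transpose_mul, Matrix.mul_assoc]

theorem invariantForm_isSymm (ρ : H →* GL n R) : (invariantForm ρ).IsSymm := by
  simp [Matrix.IsSymm, invariantForm, transpose_sum, transpose_mul]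

theorem dotProduct_mulVec_invariantForm_pos [LinearOrder R] [IsStrictOrderedRing R]
    (ρ : H →* GL n R) {v : n → R} (hv : v ≠ 0) : 0 < v ⬝ᵥ (invariantForm ρ *ᵥ v) := by
  have hterm (M : Matrix n n R) : v ⬝ᵥ ((Mᵀ * M) *ᵥ v) = (M *ᵥ v) ⬝ᵥ (M *ᵥ v) := by
    rw [← mulVec_mulVec, dotProduct_mulVec, vecMul_transpose]
  have hsq (w : n → R) : 0 ≤ w ⬝ᵥ w := Finset.sum_nonneg fun i _ => mul_self_nonneg (w i)
  simp only [invariantForm, sum_mulVec, dotProduct_sum, hterm]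
  refine Finset.sum_pos' (fun h _ => hsq _) ⟨1, Finset.mem_univ _, ?_⟩
  simpa only [map_one, Units.val_one, one_mulVec] using
    (hsq v).lt_of_ne' (dotProduct_self_eq_zero.not.mpr hv)

end InvariantForm

theorem diag_pos_of_dotProduct_mulVec_pos {R n : Type*} [CommRing R] [PartialOrder R]
    [Nontrivial R] [Fintype n] [DecidableEq n] {A : Matrix n n R}
    (hpos : ∀ v ≠ 0, 0 < v ⬝ᵥ (A *ᵥ v)) (i : n) : 0 < A i i := by
  simpa using hpos (Pi.single i 1) (by simp)

theorem det_pos_of_dotProduct_mulVec_pos {R : Type*} [CommRing R] [LinearOrder R]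
    [IsStrictOrderedRing R] {A : Matrix (Fin 2) (Fin 2) R} (hA : A.IsSymm)
    (hpos : ∀ v ≠ 0, 0 < v ⬝ᵥ (A *ᵥ v)) : 0 < A.det := by
  have h10 : A 1 0 = A 0 1 := by simpa using congrFun (congrFun hA 0) 1
  have h11 := diag_pos_of_dotProduct_mulVec_pos hpos 1
  have hv := hpos ![A 1 1, -A 0 1] (by simp [h11.ne'])
  simp only [dotProduct, mulVec, Fin.sum_univ_two, cons_val_zero, cons_val_one, cons_val_fin_one,
    h10] at hv
  rw [det_fin_two, h10]
  nlinarith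

section QuadraticAlgebraToMatrix

variable {K : Type*} [Field K] {A : Matrix (Fin 2) (Fin 2) K}

/-- Up to the factor `√(det A)`, this is the rotation by a right angle for the form `A`. -/
theorem adjugate_mul_rotation_mul_self (hA : A.IsSymm) :
    A.adjugate * !![0, 1; -1, 0] * (A.adjugate * !![0, 1; -1, 0]) = (-A.det) • 1 := by
  have h10 : A 1 0 = A 0 1 := by simpa using congrFun (congrFun hA 0) 1
  ext i j
  fin_cases i <;> fin_cases j <;> simp [adjugate_fin_two, det_fin_two, h10] <;> ring

def quadraticAlgebraToMatrix (hA : A.IsSymm) :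
    QuadraticAlgebra K (-A.det) 0 →ₐ[K] Matrix (Fin 2) (Fin 2) K :=
  QuadraticAlgebra.lift ⟨A.adjugate * !![0, 1; -1, 0], by
    rw [zero_smul, add_zero, adjugate_mul_rotation_mul_self hA]⟩

theorem quadraticAlgebraToMatrix_apply (hA : A.IsSymm) (z : QuadraticAlgebra K (-A.det) 0) :
    quadraticAlgebraToMatrix hA z =
      !![z.re + z.im * A 0 1, z.im * A 1 1; -(z.im * A 0 0), z.re - z.im * A 1 0] := by
  ext i j
  fin_cases i <;> fin_cases j <;> simp [quadraticAlgebraToMatrix, adjugate_fin_two, sub_eq_add_neg]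

theorem mem_range_quadraticAlgebraToMatrix [CharZero K] (hA : A.IsSymm) (hA₁₁ : A 1 1 ≠ 0)
    {M : Matrix (Fin 2) (Fin 2) K} (hdet : M.det = 1) (hM : Mᵀ * A * M = A) :
    M ∈ (quadraticAlgebraToMatrix hA).range := by
  have h10 : A 1 0 = A 0 1 := by simpa using congrFun (congrFun hA 0) 1
  have hadj : Mᵀ * A = A * M.adjugate :=
    calc Mᵀ * A = Mᵀ * A * (M * M.adjugate) := by
          rw [mul_adjugate, hdet, one_smul, Matrix.mul_one]
      _ = A * M.adjugate := by rw [← Matrix.mul_assoc, hM]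
  have e01 := congrFun (congrFun hadj 0) 1
  have e11 := congrFun (congrFun hadj 1) 1
  simp only [Matrix.mul_apply, transpose_apply, Fin.sum_univ_two, adjugate_fin_two, of_apply,
    cons_val', cons_val_one, cons_val_fin_one, cons_val_zero, h10] at e01 e11
  rw [AlgHom.mem_range]
  refine ⟨⟨(M 0 0 + M 1 1) / 2, M 0 1 / A 1 1⟩, ?_⟩
  rw [quadraticAlgebraToMatrix_apply, h10]
  conv_rhs => rw [eta_fin_two M]
  simp only [EmbeddingLike.apply_eq_iff_eq, vecCons_inj, and_true]
  refine ⟨⟨?_, ?_⟩, ?_, ?_⟩ <;> field_simp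
  · linear_combination e11
  · linear_combination -e01
  · linear_combination -e11

end QuadraticAlgebraToMatrix

theorem exists_injective_quadraticAlgebra_of_det_eq_one {K H : Type*} [Field K] [LinearOrder K]
    [IsStrictOrderedRing K] [Group H] [Finite H] (ρ : H →* GL (Fin 2) K)
    (hρ : Function.Injective ρ) (hdet : ∀ h, (ρ h : Matrix (Fin 2) (Fin 2) K).det = 1) :
    ∃ D : K, 0 < D ∧ ∃ φ : H →* QuadraticAlgebra K (-D) 0, Function.Injective φ := by
  have := Fintype.ofFinite H
  have hA := invariantForm_isSymm ρ
  have hpos (v : Fin 2 → K) (hv : v ≠ 0) := dotProduct_mulVec_invariantForm_pos ρ hv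
  have hdetA := det_pos_of_dotProduct_mulVec_pos hA hpos
  have := QuadraticAlgebra.fact_sq_ne_of_neg (neg_neg_of_pos hdetA)
  set ι := quadraticAlgebraToMatrix hA
  have hι : Function.Injective ι := ι.toRingHom.injective
  have hmem (h : H) : (Units.coeHom _).comp ρ h ∈ ι.range :=
    mem_range_quadraticAlgebraToMatrix hA (diag_pos_of_dotProduct_mulVec_pos hpos 1).ne'
      (hdet h) (transpose_mul_invariantForm_mul ρ h)
  set ρ' := ((Units.coeHom _).comp ρ).codRestrict ι.range hmem
  have hρ' : Function.Injective ρ' := fun x y hxy =>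
    hρ <| Units.val_injective <| congrArg Subtype.val hxy
  exact ⟨_, hdetA, (AlgEquiv.ofInjective ι hι).symm.toMonoidHom.comp ρ',
    (AlgEquiv.ofInjective ι hι).symm.injective.comp hρ'⟩

theorem natCard_le_six_of_det_eq_one {H : Type*} [Group H] [Finite H] (ρ : H →* GL (Fin 2) ℚ)
    (hρ : Function.Injective ρ) (hdet : ∀ h, (ρ h : Matrix (Fin 2) (Fin 2) ℚ).det = 1) :
    Nat.card H ≤ 6 := by
  obtain ⟨D, hD, φ, hφ⟩ := exists_injective_quadraticAlgebra_of_det_eq_one ρ hρ hdet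
  have := QuadraticAlgebra.fact_sq_ne_of_neg (neg_neg_of_pos hD)
  obtain ⟨x, hx⟩ := exists_orderOf_eq_natCard_of_injective φ hφ
  rw [← hx]
  exact QuadraticAlgebra.orderOf_le_six (neg_neg_of_pos hD)
    (φ.isOfFinOrder (isOfFinOrder_of_finite x))

/-- Every finite subgroup of `GL₂(ℚ)` has order at most `12`. -/
theorem card_finite_subgroup_GL2_rat_le (G : Subgroup (GL (Fin 2) ℚ)) [Finite G] :
    Nat.card G ≤ 12 := by
  set f : G →* ℚˣ := GeneralLinearGroup.det.comp G.subtype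
  have hker : Nat.card f.ker ≤ 6 :=
    natCard_le_six_of_det_eq_one (G.subtype.comp f.ker.subtype)
      (G.subtype_injective.comp f.ker.subtype_injective) fun h => congr(Units.val $(h.2))
  have : Finite f.range := .of_surjective _ f.rangeRestrict_surjective
  calc Nat.card G = Nat.card f.range * Nat.card f.ker := by
        rw [← Nat.card_congr (QuotientGroup.quotientKerEquivRange f).toEquiv,
          ← Subgroup.card_eq_card_quotient_mul_card_subgroup]
    _ ≤ 2 * 6 := Nat.mul_le_mul (natCard_le_two_of_subgroup_units f.range) hker
end

section
/- Let $p > 2$ be a prime and $K$ a number field. Let $m_p = \sup\{n : \xi_{p^n} \in K(\xi_p)\}$ and $e_p = [K(\xi_p) : \mathbb{Q}(\xi_{p^{m_p}})]$. If $\xi_4 \in K$, then $m_2 \leq \nu_2(e_p) + 1$ (in particular $e_p$ is even), where $m_2 = \sup\{n : \xi_{2^n} \in K\}$. -/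
open IntermediateField

/-- The primitive `m`-th root of unity `e^{2πi/m}` in `ℂ`. -/
noncomputable def primRoot (m : ℕ) : ℂ := Complex.exp (2 * Real.pi * Complex.I / m)

/-!
Write `ζ = ξ_{p^{m_p}}` and `η = ξ_{2^{m_2}}`; both lie in `K(ξ_p)`, hence so does the primitive
`p^{m_p} 2^{m_2}`-th root of unity `ζη`. The tower `ℚ(ζ) ⊆ ℚ(ζη) ⊆ K(ξ_p)` then shows that
`[ℚ(ζη) : ℚ(ζ)] = φ(2^{m_2}) = 2^{m_2 - 1}` divides `e_p`, and `m_2 ≥ 2` because `ξ_4 ∈ K`.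
-/

lemma primRoot_isPrimitiveRoot {n : ℕ} (hn : n ≠ 0) : IsPrimitiveRoot (primRoot n) n :=
  Complex.isPrimitiveRoot_exp n hn

namespace IsPrimitiveRoot

variable {L : Type*} [Field L] {ζ η : L} {m n : ℕ}

lemma mul_of_coprime (hζ : IsPrimitiveRoot ζ m) (hη : IsPrimitiveRoot η n) (hmn : m.Coprime n) :
    IsPrimitiveRoot (ζ * η) (m * n) := by
  rw [IsPrimitiveRoot.iff_orderOf] at *
  subst hζ hη
  exact (Commute.all ζ η).orderOf_mul_eq_mul_orderOf_of_coprime hmn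

lemma adjoin_simple_le_of_pow_eq_one {K : Type*} [Field K] [Algebra K L] [NeZero n]
    (hη : IsPrimitiveRoot η n) (hζ : ζ ^ n = 1) : K⟮ζ⟯ ≤ K⟮η⟯ := by
  obtain ⟨i, -, rfl⟩ := hη.eq_pow_of_pow_eq_one hζ
  rw [adjoin_simple_le_iff]
  exact pow_mem (mem_adjoin_simple_self K η) i

lemma adjoin_simple_le_adjoin_mul {K : Type*} [Field K] [Algebra K L] [NeZero m] [NeZero n]
    (hζ : IsPrimitiveRoot ζ m) (hη : IsPrimitiveRoot η n) (hmn : m.Coprime n) :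
    K⟮ζ⟯ ≤ K⟮ζ * η⟯ :=
  (hζ.mul_of_coprime hη hmn).adjoin_simple_le_of_pow_eq_one
    (by rw [pow_mul, hζ.pow_eq_one, one_pow])

variable [CharZero L]

lemma isIntegral_rat [NeZero n] (hζ : IsPrimitiveRoot ζ n) : IsIntegral ℚ ζ :=
  (hζ.isIntegral (NeZero.pos n)).tower_top

lemma finrank_adjoin_rat [NeZero n] (hζ : IsPrimitiveRoot ζ n) :
    Module.finrank ℚ ℚ⟮ζ⟯ = n.totient := by
  rw [adjoin.finrank hζ.isIntegral_rat,
    ← Polynomial.cyclotomic_eq_minpoly_rat hζ (NeZero.pos n), Polynomial.natDegree_cyclotomic]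

lemma relfinrank_adjoin_mul_of_coprime [NeZero m] [NeZero n] (hζ : IsPrimitiveRoot ζ m)
    (hη : IsPrimitiveRoot η n) (hmn : m.Coprime n) :
    relfinrank ℚ⟮ζ⟯ ℚ⟮ζ * η⟯ = n.totient := by
  have htower := finrank_bot_mul_relfinrank (hζ.adjoin_simple_le_adjoin_mul (K := ℚ) hη hmn)
  rw [hζ.finrank_adjoin_rat, (hζ.mul_of_coprime hη hmn).finrank_adjoin_rat,
    Nat.totient_mul hmn] at htower
  exact Nat.eq_of_mul_eq_mul_left (Nat.totient_pos.mpr (NeZero.pos m)) htower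

end IsPrimitiveRoot

lemma Nat.Prime.dvd_and_le_factorization_add_one_of_pow_pred_dvd {q e k : ℕ} (hq : q.Prime)
    (he : e ≠ 0) (hk : 2 ≤ k) (hdvd : q ^ (k - 1) ∣ e) :
    q ∣ e ∧ k ≤ e.factorization q + 1 := by
  refine ⟨(dvd_pow_self q (by omega)).trans hdvd, ?_⟩
  have := (hq.pow_dvd_iff_le_factorization he).mp hdvd
  omega

/-- Let `p > 2` be prime and `K` a number field (inside `ℂ`). With
`m_p = sup {n : ξ_{p^n} ∈ K(ξ_p)}` and `e_p = [K(ξ_p) : ℚ(ξ_{p^{m_p}})]`: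
if `ξ₄ ∈ K`, then `e_p` is even and `m₂ ≤ ν₂(e_p) + 1`, where
`m₂ = sup {n : ξ_{2^n} ∈ K}`. -/
theorem m2_le_of_xi4_mem (K : IntermediateField ℚ ℂ) [FiniteDimensional ℚ K]
    (p : ℕ) (hp : p.Prime) (hp2 : 2 < p)
    (mp : ℕ) (hmp : IsGreatest {n : ℕ | primRoot (p ^ n) ∈ K ⊔ ℚ⟮primRoot p⟯} mp)
    (ep : ℕ) (hep : ep = IntermediateField.relfinrank ℚ⟮primRoot (p ^ mp)⟯ (K ⊔ ℚ⟮primRoot p⟯))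
    (m2 : ℕ) (hm2 : IsGreatest {n : ℕ | primRoot (2 ^ n) ∈ K} m2)
    (hξ4 : primRoot 4 ∈ K) :
    2 ∣ ep ∧ m2 ≤ ep.factorization 2 + 1 := by
  set L := K ⊔ ℚ⟮primRoot p⟯
  have hm2_two : 2 ≤ m2 := hm2.2 (by norm_num [hξ4])
  have hcop : (p ^ mp).Coprime (2 ^ m2) :=
    .pow mp m2 ((Nat.coprime_primes hp Nat.prime_two).mpr (by omega))
  have : NeZero p := ⟨hp.ne_zero⟩
  have hζ := primRoot_isPrimitiveRoot (n := p ^ mp) (NeZero.ne _)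
  have hη := primRoot_isPrimitiveRoot (n := 2 ^ m2) (by positivity)
  have hζη_le : ℚ⟮primRoot (p ^ mp) * primRoot (2 ^ m2)⟯ ≤ L := by
    rw [adjoin_simple_le_iff]
    exact mul_mem hmp.1 (le_sup_left (b := ℚ⟮primRoot p⟯) hm2.1)
  have : FiniteDimensional ℚ ℚ⟮primRoot p⟯ :=
    adjoin.finiteDimensional (primRoot_isPrimitiveRoot (NeZero.ne p)).isIntegral_rat
  have hep_ne : ep ≠ 0 :=
    hep ▸ ne_zero_of_dvd_ne_zero Module.finrank_pos.ne' (relfinrank_dvd_finrank_bot _ L)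
  refine Nat.prime_two.dvd_and_le_factorization_add_one_of_pow_pred_dvd hep_ne hm2_two ?_
  rw [hep, ← relfinrank_mul_relfinrank (hζ.adjoin_simple_le_adjoin_mul hη hcop) hζη_le,
    hζ.relfinrank_adjoin_mul_of_coprime hη hcop, Nat.totient_prime_pow Nat.prime_two (by omega)]
  simp
end

section
/- Let $K$ be a number field of degree $d$ and $p \geq 3$ a prime. Set $t_p = [K(\xi_p) : K]$ and $m_p = \sup\{n : \xi_{p^n} \in K(\xi_p)\}$. Then for every positive integer $n$, $$m_p \left\lfloor \frac{n}{t_p} \right\rfloor \leq (\nu_p(d) + 1)\left\lfloor \frac{n}{(p-1)/\gcd(p-1,d)} \right\rfloor.$$ -/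
/-!
`K(ξ_p)` contains the cyclotomic field `ℚ(ξ_{p^{m_p}})`, whose degree `p^{m_p-1}(p-1)` therefore
divides `[K(ξ_p) : ℚ] = d t_p`. Splitting this divisibility into its prime-to-`p` part and its
`p`-part shows that `t_p` is divisible by `q p^j`, where `q = (p-1)/gcd(p-1,d)` and
`j = m_p - 1 - ν_p(d)`. Since `m_p ≤ (ν_p(d) + 1) p^j`, the bound follows from
`⌊n / t_p⌋ ≤ ⌊⌊n / q⌋ / p^j⌋`.
-/

open IntermediateField

lemma primRoot_isPrimitiveRoot_s14 {m : ℕ} (hm : m ≠ 0) : IsPrimitiveRoot (primRoot m) m := by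
  simpa [primRoot] using Complex.isPrimitiveRoot_exp m hm

lemma finrank_adjoin_primRoot {m : ℕ} (hm : m ≠ 0) :
    Module.finrank ℚ ℚ⟮primRoot m⟯ = m.totient := by
  have hζ := primRoot_isPrimitiveRoot_s14 hm
  rw [adjoin.finrank (hζ.isIntegral (Nat.pos_of_ne_zero hm)).tower_top,
    ← Polynomial.cyclotomic_eq_minpoly_rat hζ (Nat.pos_of_ne_zero hm),
    Polynomial.natDegree_cyclotomic]

lemma totient_dvd_finrank_of_primRoot_mem {L : IntermediateField ℚ ℂ} [FiniteDimensional ℚ L]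
    {m : ℕ} (hm : m ≠ 0) (hmem : primRoot m ∈ L) : m.totient ∣ Module.finrank ℚ L := by
  rw [← finrank_adjoin_primRoot hm]
  exact ⟨_, (finrank_bot_mul_relfinrank (adjoin_simple_le_iff.mpr hmem)).symm⟩

namespace Nat

lemma div_gcd_dvd_of_dvd_mul {a d t : ℕ} (ha : a ≠ 0) (h : a ∣ d * t) : a / gcd a d ∣ t := by
  rw [Nat.div_dvd_iff_dvd_mul (gcd_dvd_left a d) (gcd_pos_of_pos_left d (pos_of_ne_zero ha))]
  exact dvd_gcd_mul_iff_dvd_mul.mpr h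

lemma Prime.pow_sub_factorization_dvd_of_pow_dvd_mul {p a d t : ℕ} (hp : p.Prime) (hd : d ≠ 0)
    (ht : t ≠ 0) (h : p ^ a ∣ d * t) : p ^ (a - d.factorization p) ∣ t := by
  rw [hp.pow_dvd_iff_le_factorization (mul_ne_zero hd ht), factorization_mul hd ht] at h
  rw [hp.pow_dvd_iff_le_factorization ht]
  simp only [Finsupp.coe_add, Pi.add_apply] at h
  omega

lemma succ_le_mul_pow_sub {p : ℕ} (hp : 2 ≤ p) (k v : ℕ) : k + 1 ≤ (v + 1) * p ^ (k - v) :=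
  calc k + 1 ≤ (v + 1) * (k - v + 1) := by
        have : k ≤ v + (k - v) := by omega
        nlinarith
    _ ≤ (v + 1) * p ^ (k - v) := Nat.mul_le_mul_left _ (Nat.lt_pow_self hp)

lemma mul_div_le_mul_div_of_le_mul {m c s q t : ℕ} (hm : m ≤ c * s) (hqs : 0 < q * s)
    (ht : q * s ≤ t) (n : ℕ) : m * (n / t) ≤ c * (n / q) :=
  calc m * (n / t) ≤ c * s * (n / q / s) := by
        rw [Nat.div_div_eq_div_mul]
        exact Nat.mul_le_mul hm (div_le_div_left ht hqs)
    _ = c * (n / q / s * s) := by ring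
    _ ≤ c * (n / q) := Nat.mul_le_mul_left _ (div_mul_le_self _ _)

lemma mul_div_le_of_totient_prime_pow_dvd {p d t m : ℕ} (hp : p.Prime) (hd : d ≠ 0)
    (ht : t ≠ 0) (hdvd : (p ^ m).totient ∣ d * t) (n : ℕ) :
    m * (n / t) ≤ (d.factorization p + 1) * (n / ((p - 1) / gcd (p - 1) d)) := by
  obtain _ | k := m
  · simp
  rw [totient_prime_pow_succ hp] at hdvd
  set q := (p - 1) / gcd (p - 1) d
  set j := k - d.factorization p
  have hp1 : p - 1 ≠ 0 := by have := hp.two_le; omega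
  have hq : q ∣ p - 1 := div_dvd_of_dvd (gcd_dvd_left _ _)
  have hq_dvd : q ∣ t := div_gcd_dvd_of_dvd_mul hp1 ((Dvd.intro_left _ rfl).trans hdvd)
  have hpj_dvd : p ^ j ∣ t :=
    hp.pow_sub_factorization_dvd_of_pow_dvd_mul hd ht ((Dvd.intro _ rfl).trans hdvd)
  have hcop : Coprime q (p ^ j) :=
    (((coprime_self_sub_left hp.one_le).mpr (coprime_one_left p)).coprime_dvd_left hq).pow_right j
  have hqs : 0 < q * p ^ j :=
    Nat.mul_pos (div_pos (le_of_dvd (pos_of_ne_zero hp1) (gcd_dvd_left _ _))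
      (gcd_pos_of_pos_left _ (pos_of_ne_zero hp1))) (pow_pos hp.pos j)
  exact mul_div_le_mul_div_of_le_mul (succ_le_mul_pow_sub hp.two_le k _) hqs
    (le_of_dvd (pos_of_ne_zero ht) (hcop.mul_dvd_of_dvd_of_dvd hq_dvd hpj_dvd)) n

end Nat

theorem mp_floor_bound_general (K : IntermediateField ℚ ℂ) [FiniteDimensional ℚ K]
    (d : ℕ) (hd : d = Module.finrank ℚ K)
    (p : ℕ) (hp : p.Prime)
    (tp : ℕ) (htp : tp = IntermediateField.relfinrank K (K ⊔ ℚ⟮primRoot p⟯))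
    (mp : ℕ) (hmp : IsGreatest {n : ℕ | primRoot (p ^ n) ∈ K ⊔ ℚ⟮primRoot p⟯} mp) :
    ∀ n : ℕ, 0 < n →
      mp * (n / tp) ≤ (d.factorization p + 1) * (n / ((p - 1) / Nat.gcd (p - 1) d)) := by
  intro n _
  have : FiniteDimensional ℚ ℚ⟮primRoot p⟯ := adjoin.finiteDimensional
    ((primRoot_isPrimitiveRoot_s14 hp.ne_zero).isIntegral hp.pos).tower_top
  set L := K ⊔ ℚ⟮primRoot p⟯
  have hdL : Module.finrank ℚ L = d * tp := by
    rw [hd, htp, ← finrank_bot_mul_relfinrank (le_sup_left : K ≤ L)]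
  have hd0 : d ≠ 0 := hd ▸ Module.finrank_pos.ne'
  have htp0 : tp ≠ 0 := by
    rintro rfl
    exact Module.finrank_pos.ne' (hdL.trans (mul_zero d))
  refine Nat.mul_div_le_of_totient_prime_pow_dvd hp hd0 htp0 ?_ n
  exact hdL ▸ totient_dvd_finrank_of_primRoot_mem (pow_ne_zero _ hp.ne_zero) hmp.1

/-- Let `K` be a number field of degree `d` (inside `ℂ`) and `p ≥ 3` a prime. With
`t_p = [K(ξ_p) : K]` and `m_p = sup {n : ξ_{p^n} ∈ K(ξ_p)}`, for every positive `n`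
one has `m_p ⌊n / t_p⌋ ≤ (ν_p(d) + 1) ⌊n / ((p-1)/gcd(p-1,d))⌋`. -/
theorem mp_floor_bound (K : IntermediateField ℚ ℂ) [FiniteDimensional ℚ K]
    (d : ℕ) (hd : d = Module.finrank ℚ K)
    (p : ℕ) (hp : p.Prime) (hp3 : 3 ≤ p)
    (tp : ℕ) (htp : tp = IntermediateField.relfinrank K (K ⊔ ℚ⟮primRoot p⟯))
    (mp : ℕ) (hmp : IsGreatest {n : ℕ | primRoot (p ^ n) ∈ K ⊔ ℚ⟮primRoot p⟯} mp) :
    ∀ n : ℕ, 0 < n →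
      mp * (n / tp) ≤ (d.factorization p + 1) * (n / ((p - 1) / Nat.gcd (p - 1) d)) :=
  mp_floor_bound_general K d hd p hp tp htp mp hmp
end
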